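/- Let ρ : Matrix (Fin d₁ × Fin d₂) (Fin d₁ × Fin d₂) ℂ be positive semidefinite and separable. Then osr(ρ) ≤ sep-rank(ρ) and puri-rank(ρ) ≤ sep-rank(ρ). In particular, if ρ = Σ_{k<s} A k ⊗ₖ B k with every A k and B k positive semidefinite, then there exist d₁', d₂' ∈ ℕ and matrices L¹ k : Matrix (Fin d₁) (Fin d₁') ℂ, L² k : Matrix (Fin d₂) (Fin d₂') ℂ (k < s) such that L = Σ_{k<s} L¹ k ⊗ₖ L² k satisfies L * Lᴴ = ρ. -/

import Mathlib

open Matrix Kronecker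
open scoped BigOperators ComplexOrder

/-- Operator Schmidt rank of a bipartite matrix. -/
noncomputable def osr {d₁ d₂ : ℕ} (ρ : Matrix (Fin d₁ × Fin d₂) (Fin d₁ × Fin d₂) ℂ) : ℕ :=
  sInf {r : ℕ | ∃ (A : Fin r → Matrix (Fin d₁) (Fin d₁) ℂ)
      (B : Fin r → Matrix (Fin d₂) (Fin d₂) ℂ),
      ρ = ∑ k, A k ⊗ₖ B k}

/-- A bipartite matrix is separable if it is a finite sum of Kronecker products of psd matrices. -/
def Separable {d₁ d₂ : ℕ} (ρ : Matrix (Fin d₁ × Fin d₂) (Fin d₁ × Fin d₂) ℂ) : Prop :=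
  ∃ (r : ℕ) (A : Fin r → Matrix (Fin d₁) (Fin d₁) ℂ)
    (B : Fin r → Matrix (Fin d₂) (Fin d₂) ℂ),
    (∀ k, (A k).PosSemidef) ∧ (∀ k, (B k).PosSemidef) ∧ ρ = ∑ k, A k ⊗ₖ B k

/-- Separable rank. -/
noncomputable def sepRank {d₁ d₂ : ℕ}
    (ρ : Matrix (Fin d₁ × Fin d₂) (Fin d₁ × Fin d₂) ℂ) : ℕ :=
  sInf {r : ℕ | ∃ (A : Fin r → Matrix (Fin d₁) (Fin d₁) ℂ)
    (B : Fin r → Matrix (Fin d₂) (Fin d₂) ℂ),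
    (∀ k, (A k).PosSemidef) ∧ (∀ k, (B k).PosSemidef) ∧ ρ = ∑ k, A k ⊗ₖ B k}

/-- Purification rank. -/
noncomputable def puriRank {d₁ d₂ : ℕ}
    (ρ : Matrix (Fin d₁ × Fin d₂) (Fin d₁ × Fin d₂) ℂ) : ℕ :=
  sInf {r : ℕ | ∃ (d₁' d₂' : ℕ) (L₁ : Fin r → Matrix (Fin d₁) (Fin d₁') ℂ)
    (L₂ : Fin r → Matrix (Fin d₂) (Fin d₂') ℂ),
    (∑ k, L₁ k ⊗ₖ L₂ k) * (∑ k, L₁ k ⊗ₖ L₂ k)ᴴ = ρ}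

/-!
Write each `A k = X k * (X k)ᴴ` and `B k = Y k * (Y k)ᴴ`. Placing `X k` in the `k`-th block of an
otherwise zero block row makes the left factors `L₁ k` pairwise orthogonal (`L₁ k * (L₁ k')ᴴ = 0`
for `k ≠ k'`), so all cross terms of `L * Lᴴ` vanish for `L = ∑ k, L₁ k ⊗ₖ Y k` and what is left is
`∑ k, A k ⊗ₖ B k`. Hence a separable decomposition with `s` terms is both an operator Schmidt
decomposition and the source of a purification with `s` terms.
-/

namespace Matrix

open scoped MatrixOrder in
theorem PosSemidef.exists_eq_mul_conjTranspose {𝕜 n : Type*} [RCLike 𝕜] [Fintype n]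
    [DecidableEq n] {A : Matrix n n 𝕜} (hA : A.PosSemidef) : ∃ X : Matrix n n 𝕜, A = X * Xᴴ :=
  CStarAlgebra.nonneg_iff_eq_mul_star_self.mp hA.nonneg

variable {ι l m n p q r R : Type*}

def blockRowSingle [DecidableEq ι] [Zero R] (k : ι) (X : Matrix l m R) : Matrix l (ι × m) R :=
  of fun i c => if c.1 = k then X i c.2 else 0

theorem blockRowSingle_mul_conjTranspose_blockRowSingle [Fintype ι] [DecidableEq ι] [Fintype m]
    [Semiring R] [StarRing R] (k k' : ι) (X Y : Matrix l m R) :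
    blockRowSingle k X * (blockRowSingle k' Y)ᴴ = if k = k' then X * Yᴴ else 0 := by
  ext i j
  split_ifs with h
  · subst h
    simp [blockRowSingle, mul_apply, Fintype.sum_prod_type]
  · rw [zero_apply, mul_apply, Fintype.sum_prod_type]
    refine Finset.sum_eq_zero fun a _ => Finset.sum_eq_zero fun b _ => ?_
    by_cases ha : a = k
    · subst ha; simp [blockRowSingle, h]
    · simp [blockRowSingle, ha]

theorem kronecker_mul_conjTranspose_kronecker [Fintype m] [Fintype p] [CommSemiring R]
    [StarRing R] (A : Matrix l m R) (B : Matrix n p R) (C : Matrix q m R) (D : Matrix r p R) :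
    (A ⊗ₖ B) * (C ⊗ₖ D)ᴴ = (A * Cᴴ) ⊗ₖ (B * Dᴴ) := by
  rw [conjTranspose_kronecker, mul_kronecker_mul]

theorem sum_mul_conjTranspose_sum_of_pairwise [Fintype ι] [Fintype m] [Semiring R] [StarRing R]
    {L : ι → Matrix l m R} (h : Pairwise fun k k' => L k * (L k')ᴴ = 0) :
    (∑ k, L k) * (∑ k, L k)ᴴ = ∑ k, L k * (L k)ᴴ := by
  rw [conjTranspose_sum, Matrix.sum_mul]
  refine Finset.sum_congr rfl fun k _ => ?_
  rw [Matrix.mul_sum, Finset.sum_eq_single k (fun k' _ hk' => h (Ne.symm hk')) (by simp)]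

theorem kronecker_sum_mul_conjTranspose_of_pairwise [Fintype ι] [Fintype m] [Fintype p]
    [CommSemiring R] [StarRing R] (L₁ : ι → Matrix l m R) (L₂ : ι → Matrix n p R)
    (h : Pairwise fun k k' => L₁ k * (L₁ k')ᴴ = 0) :
    (∑ k, L₁ k ⊗ₖ L₂ k) * (∑ k, L₁ k ⊗ₖ L₂ k)ᴴ =
      ∑ k, (L₁ k * (L₁ k)ᴴ) ⊗ₖ (L₂ k * (L₂ k)ᴴ) := by
  have hkron : Pairwise fun k k' => (L₁ k ⊗ₖ L₂ k) * (L₁ k' ⊗ₖ L₂ k')ᴴ = 0 := fun k k' hkk' => by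
    simp only [kronecker_mul_conjTranspose_kronecker, h hkk', zero_kronecker]
  simp_rw [sum_mul_conjTranspose_sum_of_pairwise hkron, kronecker_mul_conjTranspose_kronecker]

end Matrix

theorem exists_purification_of_separable_decomposition {d₁ d₂ s : ℕ}
    {ρ : Matrix (Fin d₁ × Fin d₂) (Fin d₁ × Fin d₂) ℂ}
    {A : Fin s → Matrix (Fin d₁) (Fin d₁) ℂ} {B : Fin s → Matrix (Fin d₂) (Fin d₂) ℂ}
    (hA : ∀ k, (A k).PosSemidef) (hB : ∀ k, (B k).PosSemidef) (hρ : ρ = ∑ k, A k ⊗ₖ B k) :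
    ∃ (d₁' d₂' : ℕ) (L₁ : Fin s → Matrix (Fin d₁) (Fin d₁') ℂ)
      (L₂ : Fin s → Matrix (Fin d₂) (Fin d₂') ℂ),
      (∑ k, L₁ k ⊗ₖ L₂ k) * (∑ k, L₁ k ⊗ₖ L₂ k)ᴴ = ρ := by
  subst hρ
  choose X hX using fun k => (hA k).exists_eq_mul_conjTranspose
  choose Y hY using fun k => (hB k).exists_eq_mul_conjTranspose
  let L₁ k := (blockRowSingle k (X k)).submatrix id finProdFinEquiv.symm
  have hL₁ k k' : L₁ k * (L₁ k')ᴴ = if k = k' then X k * (X k)ᴴ else 0 := by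
    rw [conjTranspose_submatrix, submatrix_mul_equiv _ _ _ finProdFinEquiv.symm,
      blockRowSingle_mul_conjTranspose_blockRowSingle, submatrix_id_id]
    split_ifs with h <;> simp [h]
  refine ⟨s * d₁, d₂, L₁, Y, ?_⟩
  rw [kronecker_sum_mul_conjTranspose_of_pairwise L₁ Y fun k k' h => by simp [hL₁, h]]
  simp [hL₁, hX, hY]

theorem osr_le_sepRank_and_puriRank_le_sepRank_general {d₁ d₂ : ℕ}
    (ρ : Matrix (Fin d₁ × Fin d₂) (Fin d₁ × Fin d₂) ℂ)
    (hsep : Separable ρ) :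
    osr ρ ≤ sepRank ρ ∧ puriRank ρ ≤ sepRank ρ ∧
    ∀ (s : ℕ) (A : Fin s → Matrix (Fin d₁) (Fin d₁) ℂ)
      (B : Fin s → Matrix (Fin d₂) (Fin d₂) ℂ),
      (∀ k, (A k).PosSemidef) → (∀ k, (B k).PosSemidef) →
      ρ = ∑ k, A k ⊗ₖ B k →
      ∃ (d₁' d₂' : ℕ) (L₁ : Fin s → Matrix (Fin d₁) (Fin d₁') ℂ)
        (L₂ : Fin s → Matrix (Fin d₂) (Fin d₂') ℂ),
        (∑ k, L₁ k ⊗ₖ L₂ k) * (∑ k, L₁ k ⊗ₖ L₂ k)ᴴ = ρ := by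
  obtain ⟨A, B, hA, hB, hρ⟩ := Nat.sInf_mem hsep
  exact ⟨Nat.sInf_le ⟨A, B, hρ⟩,
    Nat.sInf_le (exists_purification_of_separable_decomposition hA hB hρ),
    fun _ _ _ => exists_purification_of_separable_decomposition⟩

/-- For a separable psd matrix, the operator Schmidt rank and the purification rank are
bounded by the separable rank; in particular any separable decomposition with `s` terms
yields a purification with `s` Kronecker terms. -/
theorem osr_le_sepRank_and_puriRank_le_sepRank {d₁ d₂ : ℕ}
    (ρ : Matrix (Fin d₁ × Fin d₂) (Fin d₁ × Fin d₂) ℂ)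
    (hρ : ρ.PosSemidef) (hsep : Separable ρ) :
    osr ρ ≤ sepRank ρ ∧ puriRank ρ ≤ sepRank ρ ∧
    ∀ (s : ℕ) (A : Fin s → Matrix (Fin d₁) (Fin d₁) ℂ)
      (B : Fin s → Matrix (Fin d₂) (Fin d₂) ℂ),
      (∀ k, (A k).PosSemidef) → (∀ k, (B k).PosSemidef) →
      ρ = ∑ k, A k ⊗ₖ B k →
      ∃ (d₁' d₂' : ℕ) (L₁ : Fin s → Matrix (Fin d₁) (Fin d₁') ℂ)
        (L₂ : Fin s → Matrix (Fin d₂) (Fin d₂') ℂ),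
        (∑ k, L₁ k ⊗ₖ L₂ k) * (∑ k, L₁ k ⊗ₖ L₂ k)ᴴ = ρ :=
  osr_le_sepRank_and_puriRank_le_sepRank_general ρ hsep
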